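/- Let A ∈ M_m(ℂ) and B ∈ M_n(ℂ) be Hermitian. Then U_{A⊗B} = U_A ⊗ U_B if and only if one of: (a) A has a single eigenvalue a ≠ 0 and every eigenvalue b of B satisfies ab² - a(1-a)b + 1 = 0 (i.e., b = (a(1-a) ± √(a²(1-a)² - 4a))/(2a)); or (b) the symmetric condition with the roles of A and B exchanged. -/

import Mathlib

/-!
Write `A = U D_μ U*` and `B = V D_ν V*` with `U`, `V` unitary and `D_μ`, `D_ν` real diagonal.
The Cayley transform commutes with every algebra automorphism, in particular with conjugation
by the unitary `U ⊗ V`, which takes `D_μ ⊗ D_ν` to `A ⊗ B`. On real diagonal matrices it acts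
entrywise by `x ↦ (x - i) / (x + i)`, so `U_{A⊗B} = U_A ⊗ U_B` holds iff
`(ab - i) / (ab + i) = (a - i) / (a + i) · (b - i) / (b + i)` for all eigenvalues `a` of `A` and
`b` of `B`; clearing denominators this is `ab(a + b - 1) + 1 = 0`. That relation is symmetric,
forces `a, b ≠ 0`, and two distinct `a, a'` related to the same `b` force `b = 1 - a - a'`; so if
`A` has two distinct eigenvalues, `B` has only one.
-/

open Matrix Kronecker Complex

noncomputable def cayley {n : Type*} [Fintype n] [DecidableEq n]
    (A : Matrix n n ℂ) : Matrix n n ℂ :=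
  (A - Complex.I • 1) * (A + Complex.I • 1)⁻¹

open Unitary

theorem map_ringInverse {M₀ N₀ F : Type*} [MonoidWithZero M₀] [MonoidWithZero N₀]
    [EquivLike F M₀ N₀] [MulEquivClass F M₀ N₀] (f : F) (x : M₀) :
    f (Ring.inverse x) = Ring.inverse (f x) := by
  by_cases hx : IsUnit x
  · lift x to M₀ˣ using hx
    have hfx : f x = Units.map (f : M₀ →* N₀) x := rfl
    rw [Ring.inverse_unit, hfx, Ring.inverse_unit, ← map_inv]
    rfl
  · rw [Ring.inverse_non_unit x hx, Ring.inverse_non_unit _ ((isUnit_map_iff f x).not.mpr hx),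
      map_zero]

theorem map_cayley {k l F : Type*} [Fintype k] [DecidableEq k] [Fintype l] [DecidableEq l]
    [EquivLike F (Matrix k k ℂ) (Matrix l l ℂ)] [AlgEquivClass F ℂ (Matrix k k ℂ) (Matrix l l ℂ)]
    (f : F) (M : Matrix k k ℂ) : f (cayley M) = cayley (f M) := by
  simp only [cayley, nonsing_inv_eq_ringInverse, map_mul, map_add, map_sub, map_smul, map_one,
    map_ringInverse]

theorem Complex.ofReal_add_I_ne_zero (x : ℝ) : (x : ℂ) + I ≠ 0 := fun h => by
  simpa using congrArg im h

theorem cayley_diagonal {k : Type*} [Fintype k] [DecidableEq k] (d : k → ℂ)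
    (hd : ∀ i, d i + I ≠ 0) :
    cayley (diagonal d) = diagonal fun i => (d i - I) / (d i + I) := by
  have hinv : (diagonal d + I • 1)⁻¹ = diagonal fun i => (d i + I)⁻¹ := by
    refine inv_eq_left_inv ?_
    rw [smul_one_eq_diagonal, diagonal_add, diagonal_mul_diagonal, ← diagonal_one]
    exact congrArg diagonal (funext fun i => inv_mul_cancel₀ (hd i))
  rw [cayley, hinv, smul_one_eq_diagonal, diagonal_sub, diagonal_mul_diagonal]
  simp only [div_eq_mul_inv]

/-- Equivalently `a * b * (a + b - 1) + 1 = 0`, which is symmetric in `a` and `b`. -/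
def IsCayleyPair (a b : ℝ) : Prop := a * b ^ 2 - a * (1 - a) * b + 1 = 0

theorem isCayleyPair_iff_cayley_mul (a b : ℝ) :
    IsCayleyPair a b ↔
      ((a * b : ℂ) - I) / (a * b + I) = (a - I) / (a + I) * ((b - I) / (b + I)) := by
  have hab : (a * b : ℂ) + I ≠ 0 := by exact_mod_cast ofReal_add_I_ne_zero (a * b)
  rw [div_mul_div_comm, div_eq_div_iff hab
    (mul_ne_zero (ofReal_add_I_ne_zero a) (ofReal_add_I_ne_zero b)), IsCayleyPair,
    ← Complex.ofReal_inj]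
  push_cast
  constructor <;> intro h
  · linear_combination (2 * I) * h - 2 * I * I_sq
  · linear_combination (-I / 2) * h + ((a : ℂ) * b ^ 2 - a * (1 - a) * b + 1 - I ^ 2) * I_sq

theorem IsCayleyPair.symm {a b : ℝ} (h : IsCayleyPair a b) : IsCayleyPair b a := by
  unfold IsCayleyPair at *
  linear_combination h

theorem IsCayleyPair.ne_zero_left {a b : ℝ} (h : IsCayleyPair a b) : a ≠ 0 := by
  rintro rfl
  simp [IsCayleyPair] at h

theorem IsCayleyPair.eq_of_ne {a a' b : ℝ} (h : IsCayleyPair a b) (h' : IsCayleyPair a' b)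
    (ha : a ≠ a') : b = 1 - a - a' := by
  have hb : b ≠ 0 := h.symm.ne_zero_left
  unfold IsCayleyPair at h h'
  have hfac : (a - a') * b * (a + a' + b - 1) = 0 := by linear_combination h - h'
  rcases mul_eq_zero.mp hfac with h₀ | h₀
  · exact absurd (mul_eq_zero.mp h₀) (by simp [sub_eq_zero, ha, hb])
  · linarith

theorem forall_isCayleyPair_iff {S T : Set ℝ} (hS : S.Nonempty) (hT : T.Nonempty) :
    (∀ a ∈ S, ∀ b ∈ T, IsCayleyPair a b) ↔
      (∃ a, a ≠ 0 ∧ S = {a} ∧ ∀ b ∈ T, IsCayleyPair a b) ∨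
        (∃ b, b ≠ 0 ∧ T = {b} ∧ ∀ a ∈ S, IsCayleyPair b a) := by
  constructor
  · intro h
    obtain ⟨a₀, ha₀⟩ := hS
    obtain ⟨b₀, hb₀⟩ := hT
    by_cases hSsub : S.Subsingleton
    · exact .inl ⟨a₀, (h a₀ ha₀ b₀ hb₀).ne_zero_left, hSsub.eq_singleton_of_mem ha₀, h a₀ ha₀⟩
    obtain ⟨a₁, ha₁, a₂, ha₂, hne⟩ := Set.not_subsingleton_iff.mp hSsub
    have hb_eq : ∀ b ∈ T, b = 1 - a₁ - a₂ := fun b hb =>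
      (h a₁ ha₁ b hb).eq_of_ne (h a₂ ha₂ b hb) hne
    refine .inr ⟨b₀, (h a₀ ha₀ b₀ hb₀).symm.ne_zero_left, ?_, fun a ha => (h a ha b₀ hb₀).symm⟩
    exact Set.eq_singleton_iff_unique_mem.mpr
      ⟨hb₀, fun b hb => (hb_eq b hb).trans (hb_eq b₀ hb₀).symm⟩
  · rintro (⟨a, -, rfl, h⟩ | ⟨b, -, rfl, h⟩)
    · simpa using h
    · simpa using fun a ha => (h a ha).symm

section Kronecker

variable {k l : Type*} [Fintype k] [DecidableEq k] [Fintype l] [DecidableEq l]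

def kroneckerUnitary {R : Type*} [CommRing R] [StarRing R] (U : unitary (Matrix k k R))
    (V : unitary (Matrix l l R)) : unitary (Matrix (k × l) (k × l) R) :=
  ⟨U ⊗ₖ V, kronecker_mem_unitary U.2 V.2⟩

theorem conjStarAlgAut_kroneckerUnitary {R : Type*} [CommRing R] [StarRing R]
    (U : unitary (Matrix k k R)) (V : unitary (Matrix l l R)) (X : Matrix k k R)
    (Y : Matrix l l R) :
    conjStarAlgAut R (Matrix (k × l) (k × l) R) (kroneckerUnitary U V) (X ⊗ₖ Y) =
      conjStarAlgAut R (Matrix k k R) U X ⊗ₖ conjStarAlgAut R (Matrix l l R) V Y := by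
  rw [conjStarAlgAut_apply, conjStarAlgAut_apply, conjStarAlgAut_apply, star_eq_conjTranspose,
    star_eq_conjTranspose, star_eq_conjTranspose]
  change (U ⊗ₖ V : Matrix _ _ R) * (X ⊗ₖ Y) * (U ⊗ₖ V : Matrix _ _ R)ᴴ = _
  rw [conjTranspose_kronecker, mul_kronecker_mul, mul_kronecker_mul]

theorem cayley_kronecker_diagonal_eq_iff (μ : k → ℝ) (ν : l → ℝ) :
    cayley (diagonal ((↑) ∘ μ) ⊗ₖ diagonal ((↑) ∘ ν)) =
        cayley (diagonal ((↑) ∘ μ)) ⊗ₖ cayley (diagonal ((↑) ∘ ν)) ↔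
      ∀ i j, IsCayleyPair (μ i) (ν j) := by
  have hprod : (fun p : k × l => (μ p.1 : ℂ) * ν p.2) = fun p => ((μ p.1 * ν p.2 : ℝ) : ℂ) := by
    push_cast; rfl
  simp only [Function.comp_def]
  rw [diagonal_kronecker_diagonal, hprod, cayley_diagonal _ fun _ => ofReal_add_I_ne_zero _,
    cayley_diagonal _ fun _ => ofReal_add_I_ne_zero _,
    cayley_diagonal _ fun _ => ofReal_add_I_ne_zero _, diagonal_kronecker_diagonal,
    diagonal_injective.eq_iff, funext_iff, Prod.forall]
  simp only [isCayleyPair_iff_cayley_mul, ofReal_mul]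

theorem cayley_kronecker_eq_iff_of_eq_conj_diagonal {A : Matrix k k ℂ} {B : Matrix l l ℂ}
    {U : unitary (Matrix k k ℂ)} {V : unitary (Matrix l l ℂ)} {μ : k → ℝ} {ν : l → ℝ}
    (hA : A = conjStarAlgAut ℂ (Matrix k k ℂ) U (diagonal ((↑) ∘ μ)))
    (hB : B = conjStarAlgAut ℂ (Matrix l l ℂ) V (diagonal ((↑) ∘ ν))) :
    cayley (A ⊗ₖ B) = cayley A ⊗ₖ cayley B ↔ ∀ i j, IsCayleyPair (μ i) (ν j) := by
  subst hA hB
  rw [← cayley_kronecker_diagonal_eq_iff, ← conjStarAlgAut_kroneckerUnitary, ← map_cayley,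
    ← map_cayley (conjStarAlgAut ℂ (Matrix k k ℂ) U),
    ← map_cayley (conjStarAlgAut ℂ (Matrix l l ℂ) V), ← conjStarAlgAut_kroneckerUnitary,
    EquivLike.apply_eq_iff_eq]

theorem Matrix.IsHermitian.cayley_kronecker_eq_iff {A : Matrix k k ℂ} {B : Matrix l l ℂ}
    (hA : A.IsHermitian) (hB : B.IsHermitian) :
    cayley (A ⊗ₖ B) = cayley A ⊗ₖ cayley B ↔
      ∀ a ∈ spectrum ℝ A, ∀ b ∈ spectrum ℝ B, IsCayleyPair a b := by
  simp only [hA.spectrum_real_eq_range_eigenvalues, hB.spectrum_real_eq_range_eigenvalues,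
    Set.forall_mem_range]
  exact cayley_kronecker_eq_iff_of_eq_conj_diagonal hA.spectral_theorem hB.spectral_theorem

end Kronecker

theorem stmt_17 {m n : ℕ} (hm : 0 < m) (hn : 0 < n)
    (A : Matrix (Fin m) (Fin m) ℂ) (B : Matrix (Fin n) (Fin n) ℂ)
    (hA : A.IsHermitian) (hB : B.IsHermitian) :
    cayley (A ⊗ₖ B) = cayley A ⊗ₖ cayley B ↔
      (∃ a : ℝ, a ≠ 0 ∧ spectrum ℝ A = {a} ∧
        ∀ b ∈ spectrum ℝ B, a * b ^ 2 - a * (1 - a) * b + 1 = 0) ∨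
      (∃ b : ℝ, b ≠ 0 ∧ spectrum ℝ B = {b} ∧
        ∀ a ∈ spectrum ℝ A, b * a ^ 2 - b * (1 - b) * a + 1 = 0) := by
  have : Nonempty (Fin m) := ⟨⟨0, hm⟩⟩
  have : Nonempty (Fin n) := ⟨⟨0, hn⟩⟩
  rw [hA.cayley_kronecker_eq_iff hB]
  exact forall_isCayleyPair_iff (hA.spectrum_real_eq_range_eigenvalues ▸ Set.range_nonempty _)
    (hB.spectrum_real_eq_range_eigenvalues ▸ Set.range_nonempty _)
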